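/- arXiv:0910.3331 — 5 statements merged into one kernel-verified Lean document; each statement's English description precedes it below -/
import Mathlib

section
/- Let G be a doubly transitive subgroup of S_n (n ≥ 2) acting on {1, …, n}, and let t ∈ S_n normalize G. Then the coset G·t contains an element fixing at least two points of {1, …, n}. -/
/-- If `G ≤ S_n` (`n ≥ 2`) is doubly transitive on `{1,…,n}` and
`t ∈ S_n` normalizes `G`, then the coset `G·t` contains an element fixing at
least two points. -/
theorem doubly_transitive_coset_two_fixed_points (n : ℕ) (hn : 2 ≤ n)
    (G : Subgroup (Equiv.Perm (Fin n)))
    (hG : ∀ a b c d : Fin n, a ≠ b → c ≠ d → ∃ g ∈ G, g a = c ∧ g b = d)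
    (t : Equiv.Perm (Fin n)) (ht : ∀ g ∈ G, t * g * t⁻¹ ∈ G) :
    ∃ g ∈ G, ∃ i j : Fin n, i ≠ j ∧ (g * t) i = i ∧ (g * t) j = j := by
  have h0 : (0 : ℕ) < n := by omega
  have h1 : (1 : ℕ) < n := by omega
  set i : Fin n := ⟨0, h0⟩
  set j : Fin n := ⟨1, h1⟩
  have hij : i ≠ j := by simp [i, j, Fin.ext_iff]
  obtain ⟨g, hgG, hg1, hg2⟩ := hG (t i) (t j) i j (fun h => hij (t.injective h)) hij
  exact ⟨g, hgG, i, j, hij, hg1, hg2⟩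
end

section
/- Let Ĝ be a finite group with normal subgroup G, and let T_1, T_2 be permutation representations of Ĝ induced from the trivial representation on subgroups H_1, H_2 with H_i ≤ G. If the permutation characters χ_{T_1} and χ_{T_2} agree on G, then they agree on all of Ĝ. -/
/-- Let `Ghat` be a finite group with normal subgroup `G`, and let
`T_i` be the permutation representation of `Ghat` on cosets of `H_i ≤ G` (`i = 1, 2`),
with permutation character counting fixed cosets. If the permutation characters
agree on `G`, they agree on all of `Ghat`. -/
theorem induced_perm_characters_eq {Ghat : Type*} [Group Ghat] [Finite Ghat]
    (G H₁ H₂ : Subgroup Ghat) [G.Normal] (h1 : H₁ ≤ G) (h2 : H₂ ≤ G)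
    (hchar : ∀ g ∈ G,
      Nat.card {x : Ghat ⧸ H₁ // g • x = x} = Nat.card {x : Ghat ⧸ H₂ // g • x = x}) :
    ∀ g : Ghat,
      Nat.card {x : Ghat ⧸ H₁ // g • x = x} = Nat.card {x : Ghat ⧸ H₂ // g • x = x} := by
  intro g
  by_cases hg : g ∈ G
  · exact hchar g hg
  · have empty : ∀ (H : Subgroup Ghat), H ≤ G → IsEmpty {x : Ghat ⧸ H // g • x = x} := by
      intro H hH
      constructor
      rintro ⟨x, hx⟩
      induction x using QuotientGroup.induction_on with
      | H x =>
        have : (g * x)⁻¹ * x ∈ H := (QuotientGroup.eq).mp hx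
        have hG : (g * x)⁻¹ * x ∈ G := hH this
        have : x⁻¹ * g⁻¹ * x ∈ G := by
          simpa [mul_inv_rev, mul_assoc] using hG
        have hgi : g⁻¹ ∈ G := by
          have := Subgroup.Normal.conj_mem ‹G.Normal› _ this x
          simpa [mul_assoc] using this
        exact hg (by simpa using G.inv_mem hgi)
    have e1 := empty H₁ h1
    have e2 := empty H₂ h2
    rw [Nat.card_of_isEmpty, Nat.card_of_isEmpty]
end

section
/- Let p be an odd prime, k ≥ 0, and V = (Z/p^{k+1})². Consider 4-tuples (v_1, v_2, v_3, v_4) ∈ V⁴ with v_1 − v_2 + v_3 − v_4 = 0 and such that the differences {v_i − v_j : 1 ≤ i < j ≤ 4} generate V. Then the group GL_2(Z/p^{k+1}) ⋉ V (acting by β: v_i ↦ β(v_i) and translations v_i ↦ v_i + w simultaneously on all four entries) acts transitively on the set of such tuples. -/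
/-!
Since `v₂ - v₀ = (v₁ - v₀) + (v₃ - v₀)`, an admissible tuple is determined by `v₀` and the
pair `(v₁ - v₀, v₃ - v₀)`, and this pair spans `V`. A spanning pair in `R²`, `R` any commutative
ring, is a basis (the matrix with these columns has surjective `mulVec`, hence is invertible),
so a matrix in `GL₂(R)` maps one such pair to the other, and a translation fixes `v₀`.
-/

open Submodule Set

namespace Matrix

variable {ι R : Type*} [Fintype ι] [DecidableEq ι] [CommRing R]

theorem isUnit_of_span_col_eq_top {A : Matrix ι ι R} (h : span R (range A.col) = ⊤) :
    IsUnit A :=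
  mulVec_surjective_iff_isUnit.1 <| LinearMap.range_eq_top.1 <| A.range_mulVecLin.trans h

theorem exists_GL_mulVec_eq_of_span_eq_top {b b' : ι → ι → R}
    (hb : span R (range b) = ⊤) (hb' : span R (range b') = ⊤) :
    ∃ β : GL ι R, ∀ i, β.val *ᵥ b i = b' i := by
  obtain ⟨A, hA⟩ := isUnit_of_span_col_eq_top (A := (of b)ᵀ) hb
  obtain ⟨A', hA'⟩ := isUnit_of_span_col_eq_top (A := (of b')ᵀ) hb'
  refine ⟨A' * A⁻¹, fun i => ?_⟩
  rw [← of_col b, ← of_col b', ← hA, ← hA', ← mulVec_single_one, ← mulVec_single_one,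
    mulVec_mulVec, Units.val_mul, Matrix.mul_assoc, ← Units.val_mul, inv_mul_cancel,
    Units.val_one, Matrix.mul_one]

end Matrix

section ProductOneTuple

variable {R M N : Type*} [Ring R] [AddCommGroup M] [Module R M] [AddCommGroup N]

theorem sub_eq_add_of_alternating_sum_eq_zero {u : Fin 4 → M} (hu : u 0 - u 1 + u 2 - u 3 = 0) :
    u 2 - u 0 = (u 1 - u 0) + (u 3 - u 0) := by
  rw [← sub_eq_zero, ← hu]; abel

theorem sub_zero_mem_span_of_alternating_sum_eq_zero {u : Fin 4 → M}
    (hu : u 0 - u 1 + u 2 - u 3 = 0) (i : Fin 4) :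
    u i - u 0 ∈ span R (range ![u 1 - u 0, u 3 - u 0]) := by
  have ha : u 1 - u 0 ∈ span R (range ![u 1 - u 0, u 3 - u 0]) := subset_span ⟨0, rfl⟩
  have hb : u 3 - u 0 ∈ span R (range ![u 1 - u 0, u 3 - u 0]) := subset_span ⟨1, rfl⟩
  fin_cases i
  · simp
  · exact ha
  · show u 2 - u 0 ∈ _
    rw [sub_eq_add_of_alternating_sum_eq_zero hu]
    exact add_mem ha hb
  · exact hb

theorem span_sub_pair_eq_top {u : Fin 4 → M} (hu : u 0 - u 1 + u 2 - u 3 = 0)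
    (hgen : span R {x | ∃ i j : Fin 4, i < j ∧ x = u i - u j} = ⊤) :
    span R (range ![u 1 - u 0, u 3 - u 0]) = ⊤ := by
  refine top_unique (hgen ▸ span_le.2 ?_)
  rintro _ ⟨i, j, -, rfl⟩
  rw [← sub_sub_sub_cancel_right (u i) (u j) (u 0)]
  exact sub_mem (sub_zero_mem_span_of_alternating_sum_eq_zero hu i)
    (sub_zero_mem_span_of_alternating_sum_eq_zero hu j)

theorem map_add_eq_of_map_sub_pair (f : M →+ N) {u : Fin 4 → M} {u' : Fin 4 → N}
    (hu : u 0 - u 1 + u 2 - u 3 = 0) (hu' : u' 0 - u' 1 + u' 2 - u' 3 = 0)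
    (hf : ∀ j, f (![u 1 - u 0, u 3 - u 0] j) = ![u' 1 - u' 0, u' 3 - u' 0] j) (i : Fin 4) :
    f (u i) + (u' 0 - f (u 0)) = u' i := by
  have hdiff : f (u i - u 0) = u' i - u' 0 := by
    fin_cases i
    · simp
    · exact hf 0
    · show f (u 2 - u 0) = u' 2 - u' 0
      rw [sub_eq_add_of_alternating_sum_eq_zero hu, sub_eq_add_of_alternating_sum_eq_zero hu',
        map_add]
      exact congrArg₂ (· + ·) (hf 0) (hf 1)
    · exact hf 1
  rw [map_sub] at hdiff
  rw [← sub_add_cancel (u' i) (u' 0), ← hdiff]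
  abel

end ProductOneTuple

theorem affine_transitive_on_nielsen_tuples_general (p : ℕ) (k : ℕ)
    (v v' : Fin 4 → (Fin 2 → ZMod (p ^ (k + 1))))
    (hsum : v 0 - v 1 + v 2 - v 3 = 0) (hsum' : v' 0 - v' 1 + v' 2 - v' 3 = 0)
    (hgen : Submodule.span (ZMod (p ^ (k + 1)))
      {x | ∃ i j : Fin 4, i < j ∧ x = v i - v j} = ⊤)
    (hgen' : Submodule.span (ZMod (p ^ (k + 1)))
      {x | ∃ i j : Fin 4, i < j ∧ x = v' i - v' j} = ⊤) :
    ∃ (β : Matrix.GeneralLinearGroup (Fin 2) (ZMod (p ^ (k + 1))))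
      (w : Fin 2 → ZMod (p ^ (k + 1))),
      ∀ i : Fin 4, β.val.mulVec (v i) + w = v' i := by
  obtain ⟨β, hβ⟩ := Matrix.exists_GL_mulVec_eq_of_span_eq_top
    (span_sub_pair_eq_top hsum hgen) (span_sub_pair_eq_top hsum' hgen')
  exact ⟨β, v' 0 - β.val.mulVec (v 0),
    map_add_eq_of_map_sub_pair β.val.mulVecLin.toAddMonoidHom hsum hsum' hβ⟩

/-- Let `p` be an odd prime, `k ≥ 0`, `V = (Z/p^{k+1})²`. The affine
group `GL_2(Z/p^{k+1}) ⋉ V` acts transitively on 4-tuples `(v₁,v₂,v₃,v₄) ∈ V⁴`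
satisfying the product-one condition `v₁ − v₂ + v₃ − v₄ = 0` and the generation
condition that the differences `v_i − v_j` (`i < j`) span `V`. -/
theorem affine_transitive_on_nielsen_tuples (p : ℕ) (hp : p.Prime) (hodd : p ≠ 2) (k : ℕ)
    (v v' : Fin 4 → (Fin 2 → ZMod (p ^ (k + 1))))
    (hsum : v 0 - v 1 + v 2 - v 3 = 0) (hsum' : v' 0 - v' 1 + v' 2 - v' 3 = 0)
    (hgen : Submodule.span (ZMod (p ^ (k + 1)))
      {x | ∃ i j : Fin 4, i < j ∧ x = v i - v j} = ⊤)
    (hgen' : Submodule.span (ZMod (p ^ (k + 1)))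
      {x | ∃ i j : Fin 4, i < j ∧ x = v' i - v' j} = ⊤) :
    ∃ (β : Matrix.GeneralLinearGroup (Fin 2) (ZMod (p ^ (k + 1))))
      (w : Fin 2 → ZMod (p ^ (k + 1))),
      ∀ i : Fin 4, β.val.mulVec (v i) + w = v' i :=
  affine_transitive_on_nielsen_tuples_general p k v v' hsum hsum' hgen hgen'
end

section
/- Let q be an odd prime power and n an odd positive integer coprime to q² − 1. Then the Dickson polynomial D_{n,a} (for any a ∈ F_q^×) induces a bijection of F_q. More precisely, the map x ↦ x^n + a^n/x^n on F_{q²}^× descends to show x + a/x ↦ x^n + (a/x)^n is a well-defined bijection on the image of x ↦ x + a/x in F_q, and D_{n,a}: F_q → F_q is a permutation. -/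
/-!
Write `u = x + y` with `x * y = a` in an algebraic closure, so that `D_{n,a}(u) = x ^ n + y ^ n`.
As roots of `X ^ 2 - u X + a` over `F_q`, both `x` and `y` satisfy `t ^ (q ^ 2) = t`, and on this
set `t ↦ t ^ n` is injective because `n` is prime to `q ^ 2 - 1`. Hence `D_{n,a}(u)` together with
`(x * y) ^ n = a ^ n` determines the pair `{x ^ n, y ^ n}`, then `{x, y}`, and finally `u`.
-/

open Polynomial

theorem Polynomial.dickson_one_eval_add {R : Type*} [CommRing R] (x y : R) :
    ∀ n, (dickson 1 (x * y) n).eval (x + y) = x ^ n + y ^ n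
  | 0 => by simp only [dickson_zero, pow_zero]; norm_num
  | 1 => by simp only [dickson_one, eval_X, pow_one]
  | n + 2 => by
    simp only [dickson_add_two, eval_sub, eval_mul, eval_X, eval_C, dickson_one_eval_add x y n,
      dickson_one_eval_add x y (n + 1)]
    ring

theorem Polynomial.dickson_one_eval_of_add_of_mul {R S : Type*} [CommRing R] [CommRing S]
    (f : R →+* S) {a u : R} {x y : S} (hsum : x + y = f u) (hprod : x * y = f a) (n : ℕ) :
    f ((dickson 1 a n).eval u) = x ^ n + y ^ n := by
  rw [← eval₂_at_apply, ← eval_map, map_dickson, ← hsum, ← hprod, dickson_one_eval_add]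

theorem IsAlgClosed.exists_add_eq_and_mul_eq {K : Type*} [Field K] [IsAlgClosed K] (s p : K) :
    ∃ x y : K, x + y = s ∧ x * y = p := by
  have hdeg : (X ^ 2 - C s * X + C p).degree = 2 := by compute_degree!
  obtain ⟨x, hx⟩ := IsAlgClosed.exists_root (X ^ 2 - C s * X + C p) (by rw [hdeg]; decide)
  simp only [IsRoot, eval_add, eval_sub, eval_mul, eval_pow, eval_C, eval_X] at hx
  exact ⟨x, s - x, by ring, by linear_combination -hx⟩

/-- Frobenius permutes the two roots `x, y` of `X ^ 2 - u X + c`, so its square fixes them. -/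
theorem FiniteField.pow_card_sq_eq_self_of_add_of_mul {F L : Type*} [Field F] [Fintype F]
    [CommRing L] [IsDomain L] [Algebra F L] {u c : F} {x y : L}
    (hsum : x + y = algebraMap F L u) (hprod : x * y = algebraMap F L c) :
    x ^ Fintype.card F ^ 2 = x := by
  set φ := FiniteField.frobeniusAlgHom F L
  have hsum' : φ x + φ y = x + y := by rw [← map_add, hsum, AlgHom.commutes]
  have hprod' : φ x * φ y = x * y := by rw [← map_mul, hprod, AlgHom.commutes]
  have hroot : (φ x - x) * (φ x - y) = 0 := by linear_combination φ x * hsum' - hprod'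
  have hφφ : φ (φ x) = x := by
    rcases mul_eq_zero.mp hroot with h | h
    · rw [sub_eq_zero.mp h, sub_eq_zero.mp h]
    · rw [sub_eq_zero.mp h]; linear_combination hsum' - h
  rwa [sq, pow_mul]

theorem pow_injOn_setOf_pow_eq_self {G₀ : Type*} [CommGroupWithZero G₀] {m n : ℕ}
    (hn : n ≠ 0) (hcop : n.Coprime (m - 1)) : {x : G₀ | x ^ m = x}.InjOn (· ^ n) := by
  have unit_root : ∀ x : G₀, x ≠ 0 → x ^ m = x → x ^ (m - 1) = 1 := by
    intro x hx0 hx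
    rcases m with _ | m
    · exact pow_zero x
    · rw [pow_succ] at hx
      simpa using (mul_eq_right₀ hx0).mp hx
  intro s hs t ht (hst : s ^ n = t ^ n)
  have hzero : s = 0 ↔ t = 0 := by rw [← pow_eq_zero_iff hn, hst, pow_eq_zero_iff hn]
  obtain rfl | ht0 := eq_or_ne t 0
  · exact hzero.mpr rfl
  have hs0 : s ≠ 0 := hzero.not.mpr ht0
  rw [← div_eq_one_iff_eq ht0, ← pow_eq_one_iff_of_coprime hcop, div_pow, div_pow, hst,
    div_self (pow_ne_zero _ ht0), unit_root s hs0 hs, unit_root t ht0 ht, div_one]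
  exact ⟨rfl, rfl⟩

theorem add_eq_add_of_injOn_pow {R : Type*} [CommRing R] [IsDomain R] {S : Set R} {n : ℕ}
    (hS : S.InjOn (· ^ n)) {x y z w : R}
    (hx : x ∈ S) (hy : y ∈ S) (hz : z ∈ S) (hw : w ∈ S)
    (hsum : x ^ n + y ^ n = z ^ n + w ^ n) (hprod : x ^ n * y ^ n = z ^ n * w ^ n) :
    x + y = z + w := by
  have hroot : (z ^ n - x ^ n) * (z ^ n - y ^ n) = 0 := by
    linear_combination (-z ^ n) * hsum + hprod
  rcases mul_eq_zero.mp hroot with h | h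
  · have hzx : z = x := hS hz hx (sub_eq_zero.mp h)
    have hwy : w = y := hS hw hy (by simp only; linear_combination -hsum - h)
    rw [hzx, hwy]
  · have hzy : z = y := hS hz hy (sub_eq_zero.mp h)
    have hwx : w = x := hS hw hx (by simp only; linear_combination -hsum - h)
    rw [hzy, hwx, add_comm]

theorem dickson_permutation_general {F : Type*} [Field F] [Fintype F]
    (a : F) (n : ℕ)
    (hcop : Nat.Coprime n (Fintype.card F ^ 2 - 1)) :
    Function.Bijective (fun x : F => (Polynomial.dickson 1 a n).eval x) := by
  set q := Fintype.card F
  have hn : n ≠ 0 := by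
    rintro rfl
    have : 2 ^ 2 ≤ q ^ 2 := Nat.pow_le_pow_left Fintype.one_lt_card 2
    rw [Nat.coprime_zero_left] at hcop
    omega
  let f := algebraMap F (AlgebraicClosure F)
  refine Finite.injective_iff_bijective.mp fun u v huv => f.injective ?_
  obtain ⟨x, y, hxy, hxy'⟩ := IsAlgClosed.exists_add_eq_and_mul_eq (f u) (f a)
  obtain ⟨z, w, hzw, hzw'⟩ := IsAlgClosed.exists_add_eq_and_mul_eq (f v) (f a)
  have hsum : x ^ n + y ^ n = z ^ n + w ^ n := by
    rw [← dickson_one_eval_of_add_of_mul f hxy hxy',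
      ← dickson_one_eval_of_add_of_mul f hzw hzw']
    exact congrArg f huv
  have hprod : x ^ n * y ^ n = z ^ n * w ^ n := by rw [← mul_pow, ← mul_pow, hxy', hzw']
  have fixed : ∀ {s t : AlgebraicClosure F} {u : F}, s + t = f u → s * t = f a →
      s ^ q ^ 2 = s ∧ t ^ q ^ 2 = t := fun hs hp =>
    ⟨FiniteField.pow_card_sq_eq_self_of_add_of_mul hs hp,
      FiniteField.pow_card_sq_eq_self_of_add_of_mul ((add_comm _ _).trans hs)
        ((mul_comm _ _).trans hp)⟩
  obtain ⟨hx, hy⟩ := fixed hxy hxy'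
  obtain ⟨hz, hw⟩ := fixed hzw hzw'
  rw [← hxy, ← hzw]
  exact add_eq_add_of_injOn_pow (S := {t | t ^ q ^ 2 = t}) (pow_injOn_setOf_pow_eq_self hn hcop)
    hx hy hz hw hsum hprod

/-- Let `F` be a finite field of odd order `q`, `a ∈ F^×`, and `n` odd
with `gcd(n, q² − 1) = 1`. Then the Dickson polynomial `D_{n,a}` is a permutation
polynomial of `F`. -/
theorem dickson_permutation {F : Type*} [Field F] [Fintype F]
    (hq : Odd (Fintype.card F)) (a : F) (ha : a ≠ 0) (n : ℕ) (hn : Odd n)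
    (hcop : Nat.Coprime n (Fintype.card F ^ 2 - 1)) :
    Function.Bijective (fun x : F => (Polynomial.dickson 1 a n).eval x) :=
  dickson_permutation_general a n hcop
end

section
/- Let n be odd, p an odd prime not dividing n, and q a power of p. The exceptionality set E'_{n,q} = {t ≥ 1 : gcd(n, q^{2t} − 1) = 1} is nonempty if and only if for every prime divisor ℓ of n, the multiplicative order of q modulo ℓ exceeds 2. -/
/-!
If `ord_ℓ(q) ≤ 2` for a prime `ℓ ∣ n`, then `ℓ ∣ q^{2t} - 1` for every `t`. Conversely, if all
these orders exceed `2`, take `t = n! + 1`: a prime `ℓ ∣ gcd(n, q^{2t} - 1)` would have `ord_ℓ(q)`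
dividing both `2t = 2 n! + 2` and `ℓ - 1 ∣ n!`, hence dividing `2`.
-/

open Nat

theorem IsOfFinOrder.sq_eq_one_of_orderOf_le_two {G : Type*} [Monoid G] {a : G}
    (ha : IsOfFinOrder a) (h : orderOf a ≤ 2) : a ^ 2 = 1 := by
  have hpos := ha.orderOf_pos
  rw [← orderOf_dvd_iff_pow_eq_one]
  interval_cases orderOf a <;> norm_num

theorem ZMod.isOfFinOrder_of_ne_zero {ℓ : ℕ} [Fact ℓ.Prime] {a : ZMod ℓ} (ha : a ≠ 0) :
    IsOfFinOrder a :=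
  isOfFinOrder_iff_pow_eq_one.mpr
    ⟨ℓ - 1, Nat.sub_pos_of_lt (Fact.out : ℓ.Prime).one_lt, ZMod.pow_card_sub_one_eq_one ha⟩

theorem dvd_pow_sub_one_iff_natCast_pow_eq_one {ℓ q : ℕ} (k : ℕ) (hq : q ≠ 0) :
    ℓ ∣ q ^ k - 1 ↔ (q : ZMod ℓ) ^ k = 1 := by
  rw [← Nat.modEq_iff_dvd' (Nat.one_le_pow _ _ (Nat.pos_of_ne_zero hq)),
    ← ZMod.natCast_eq_natCast_iff, eq_comm, Nat.cast_pow, Nat.cast_one]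

section

variable {n q : ℕ}

theorem two_lt_orderOf_of_coprime_pow_two_mul_sub_one (hnq : n.Coprime q)
    {t : ℕ} (ht : n.Coprime (q ^ (2 * t) - 1)) {ℓ : ℕ} (hℓ : ℓ.Prime) (hℓn : ℓ ∣ n) :
    2 < orderOf (q : ZMod ℓ) := by
  have : Fact ℓ.Prime := ⟨hℓ⟩
  have hℓq : ¬ ℓ ∣ q := fun hℓq => hℓ.one_lt.ne' (Nat.eq_one_of_dvd_coprimes hnq hℓn hℓq)
  have hq0 : (q : ZMod ℓ) ≠ 0 := mt (ZMod.natCast_eq_zero_iff q ℓ).mp hℓq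
  by_contra! hle
  have hsq := (ZMod.isOfFinOrder_of_ne_zero hq0).sq_eq_one_of_orderOf_le_two hle
  have hdvd : ℓ ∣ q ^ (2 * t) - 1 := by
    rw [dvd_pow_sub_one_iff_natCast_pow_eq_one _ (by rintro rfl; exact hℓq (dvd_zero ℓ)),
      pow_mul, hsq, one_pow]
  exact hℓ.one_lt.ne' (Nat.eq_one_of_dvd_coprimes ht hℓn hdvd)

theorem coprime_pow_two_mul_factorial_succ_sub_one (hn : n ≠ 0)
    (hord : ∀ ℓ : ℕ, ℓ.Prime → ℓ ∣ n → 2 < orderOf (q : ZMod ℓ)) :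
    n.Coprime (q ^ (2 * (n ! + 1)) - 1) := by
  refine Nat.coprime_of_dvd fun ℓ hℓ hℓn hℓd => ?_
  have : Fact ℓ.Prime := ⟨hℓ⟩
  have hq0 : (q : ZMod ℓ) ≠ 0 := fun h => by
    have := hord ℓ hℓ hℓn
    rw [h, orderOf_zero] at this
    omega
  have hq : q ≠ 0 := by rintro rfl; exact hq0 Nat.cast_zero
  have h2t : orderOf (q : ZMod ℓ) ∣ 2 * n ! + 2 :=
    orderOf_dvd_of_pow_eq_one ((dvd_pow_sub_one_iff_natCast_pow_eq_one _ hq).mp hℓd)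
  have h2fac : orderOf (q : ZMod ℓ) ∣ 2 * n ! :=
    ((ZMod.orderOf_dvd_card_sub_one hq0).trans
      (Nat.dvd_factorial (Nat.sub_pos_of_lt hℓ.one_lt)
        ((Nat.sub_le ℓ 1).trans (Nat.le_of_dvd (Nat.pos_of_ne_zero hn) hℓn)))).mul_left 2
  have := Nat.le_of_dvd two_pos ((Nat.dvd_add_right h2fac).mp h2t)
  exact absurd (hord ℓ hℓ hℓn) (by omega)

theorem exists_coprime_pow_two_mul_sub_one_iff (hn : n ≠ 0) (hnq : n.Coprime q) :
    (∃ t : ℕ, 1 ≤ t ∧ n.Coprime (q ^ (2 * t) - 1)) ↔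
      ∀ ℓ : ℕ, ℓ.Prime → ℓ ∣ n → 2 < orderOf (q : ZMod ℓ) :=
  ⟨fun ⟨_, _, ht⟩ _ hℓ hℓn =>
      two_lt_orderOf_of_coprime_pow_two_mul_sub_one hnq ht hℓ hℓn,
    fun hord =>
      ⟨n ! + 1, Nat.le_add_left 1 _, coprime_pow_two_mul_factorial_succ_sub_one hn hord⟩⟩

end

theorem exceptionality_set_nonempty_iff_general (n p e q : ℕ) (hn : Odd n) (hp : p.Prime)
    (hpn : ¬ p ∣ n) (hq : q = p ^ e) :
    (∃ t : ℕ, 1 ≤ t ∧ Nat.Coprime n (q ^ (2 * t) - 1)) ↔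
      ∀ ℓ : ℕ, ℓ.Prime → ℓ ∣ n → 2 < orderOf (q : ZMod ℓ) := by
  subst hq
  have hnp : n.Coprime (p ^ e) := ((hp.coprime_iff_not_dvd.mpr hpn).pow_left e).symm
  exact exists_coprime_pow_two_mul_sub_one_iff hn.pos.ne' hnp

/-- Let `n` be odd, `p` an odd prime not dividing `n`, and `q = p^e`
(`e ≥ 1`). The exceptionality set `E'_{n,q} = {t ≥ 1 : gcd(n, q^{2t} − 1) = 1}` is
nonempty if and only if for every prime divisor `ℓ` of `n`, the multiplicative
order of `q` modulo `ℓ` exceeds 2. -/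
theorem exceptionality_set_nonempty_iff (n p e q : ℕ) (hn : Odd n) (hp : p.Prime)
    (hpodd : p ≠ 2) (hpn : ¬ p ∣ n) (he : 1 ≤ e) (hq : q = p ^ e) :
    (∃ t : ℕ, 1 ≤ t ∧ Nat.Coprime n (q ^ (2 * t) - 1)) ↔
      ∀ ℓ : ℕ, ℓ.Prime → ℓ ∣ n → 2 < orderOf (q : ZMod ℓ) :=
  exceptionality_set_nonempty_iff_general n p e q hn hp hpn hq
end
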